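/- Let R be a commutative Noetherian ring. Let Y be a bounded below acyclic chain complex of R-modules all of whose cycle modules Z_n(Y) are cotorsion. Then Ext^1(F, Y) = 0 for every F-totally acyclic complex of flats F, where Ext^1 is computed in the abelian category Ch(R) of chain complexes of R-modules. -/

import Mathlib

/-!
Given a short exact sequence `0 → Y → E → F → 0` of complexes, a chain section of `g : E → F`
is built degree by degree from below; below the bound of `Y`, `g_n` is an isomorphism.
In degree `n`, a section `τ` compatible with the section `σ` in degree `n - 1` is a lift of
`(id, σ ∘ d) : F_n → F_n × E_{n-1}` along `(g_n, d) : E_n → F_n × E_{n-1}`.  Acyclicity of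
`Y` makes `(id, σ ∘ d)` land in the image of `(g_n, d)`, whose kernel is `Z_n Y`.  Since `F_n`
is flat and `Z_n Y` is cotorsion, the pullback extension of `F_n` by `Z_n Y` splits, which
gives the lift.
-/

universe u v

open CategoryTheory MonoidalCategory Limits

/-- Vanishing of (Yoneda) `Ext¹(A, B)` in an abelian category: every short exact
sequence `0 → B → E → A → 0` splits. -/
def Ext1Vanishes {C : Type*} [Category C] [Abelian C] (A B : C) : Prop :=
  ∀ (E : C) (f : B ⟶ E) (g : E ⟶ A) (w : f ≫ g = 0),
    (ShortComplex.mk f g w).ShortExact → ∃ s : A ⟶ E, s ≫ g = 𝟙 A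

variable {R : Type u} [CommRing R]

/-- An `R`-module `M` is cotorsion if `Ext¹_R(F, M) = 0` for every flat `R`-module `F`. -/
def IsCotorsionModule (M : ModuleCat.{u} R) : Prop :=
  ∀ F : ModuleCat.{u} R, Module.Flat R F → Ext1Vanishes F M

/-- A chain complex `F` of `R`-modules is an F-totally acyclic complex of flats if all its
components are flat, it is acyclic, and `I ⊗[R] F` is acyclic for every injective
`R`-module `I`. -/
def FTotallyAcyclic (F : ChainComplex (ModuleCat.{u} R) ℤ) : Prop :=
  (∀ n, Module.Flat R (F.X n)) ∧ (∀ n, F.ExactAt n) ∧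
    ∀ I : ModuleCat.{u} R, Module.Injective R I →
      ∀ n, (((tensorLeft I).mapHomologicalComplex (ComplexShape.down ℤ)).obj F).ExactAt n

theorem Ext1Vanishes.of_iso_right {C : Type*} [Category C] [Abelian C] {A B B' : C}
    (h : Ext1Vanishes A B) (e : B ≅ B') : Ext1Vanishes A B' := by
  intro E f g w hS
  refine h E (e.hom ≫ f) g (by rw [Category.assoc, w, comp_zero]) ?_
  exact ShortComplex.shortExact_of_iso
    (ShortComplex.isoMk e.symm (Iso.refl E) (Iso.refl A) (by simp) (by simp)) hS

section Modules

variable {S : Type*} [Ring S]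

theorem ModuleCat.exists_lift_of_ext1Vanishes_ker {A M N : ModuleCat.{v} S}
    (p : M ⟶ N) (φ : A ⟶ N) (hker : Ext1Vanishes A (ModuleCat.of S (LinearMap.ker p.hom)))
    (hrange : LinearMap.range φ.hom ≤ LinearMap.range p.hom) :
    ∃ ψ : A ⟶ M, ψ ≫ p = φ := by
  -- the pullback of `p` along `φ`, an extension of `A` by `ker p`
  let P := LinearMap.ker (p.hom.coprod (-φ.hom))
  have mem_P (v : M × A) : v ∈ P ↔ p v.1 = φ v.2 := by
    simp [P, ← sub_eq_add_neg, sub_eq_zero]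
  let ι : ModuleCat.of S (LinearMap.ker p.hom) ⟶ ModuleCat.of S P :=
    ModuleCat.ofHom <| ((LinearMap.inl S M A).comp (LinearMap.ker p.hom).subtype).codRestrict P
      fun k => (mem_P _).2 (by simp)
  let π : ModuleCat.of S P ⟶ A := ModuleCat.ofHom ((LinearMap.snd S M A).comp P.subtype)
  have hιπ : ι ≫ π = 0 := by ext; rfl
  have hSE : (ShortComplex.mk ι π hιπ).ShortExact := by
    refine .mk' ((ShortComplex.ShortExact.moduleCat_exact_iff_function_exact _).2 ?_)
      ((ModuleCat.mono_iff_injective _).2 ?_) ((ModuleCat.epi_iff_surjective _).2 ?_)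
    · rintro ⟨⟨m, a⟩, hv⟩
      refine ⟨?_, fun ⟨k, hk⟩ => hk ▸ rfl⟩
      rintro (rfl : a = 0)
      exact ⟨⟨m, by simpa using (mem_P _).1 hv⟩, rfl⟩
    · intro k k' h
      exact Subtype.ext (congrArg (fun v : P => v.1.1) h)
    · intro a
      obtain ⟨m, hm⟩ := hrange ⟨a, rfl⟩
      exact ⟨⟨(m, a), (mem_P _).2 hm⟩, rfl⟩
  obtain ⟨s, hs⟩ := hker _ ι π hιπ hSE
  refine ⟨s ≫ ModuleCat.ofHom ((LinearMap.fst S M A).comp P.subtype), ?_⟩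
  ext a
  have hsa : (s a).1.2 = a := ConcreteCategory.congr_hom hs a
  simpa [hsa] using (mem_P _).1 (s a).2

variable {ι : Type*} {c : ComplexShape ι}

namespace HomologicalComplex

variable {K L M : HomologicalComplex (ModuleCat.{v} S) c}

theorem Hom.comm_moduleCat_apply (φ : K ⟶ L) (i j : ι) (x : K.X i) :
    L.d i j (φ.f i x) = φ.f j (K.d i j x) :=
  ConcreteCategory.congr_hom (φ.comm i j) x

theorem d_d_moduleCat_apply (i j k : ι) (x : K.X i) : K.d j k (K.d i j x) = 0 := by
  rw [← ConcreteCategory.comp_apply, K.d_comp_d]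
  rfl

theorem comp_f_moduleCat_apply_eq_zero {φ : K ⟶ L} {ψ : L ⟶ M} (h : φ ≫ ψ = 0) (i : ι)
    (x : K.X i) : ψ.f i (φ.f i x) = 0 := by
  simpa using ConcreteCategory.congr_hom (congr_hom h i) x

theorem exists_d_eq_of_exactAt_moduleCat {i j k : ι} (hij : c.Rel i j) (hjk : c.Rel j k)
    (h : K.ExactAt j) (y : K.X j) (hy : K.d j k y = 0) : ∃ z : K.X i, K.d i j z = y :=
  (ShortComplex.moduleCat_exact_iff _).1
    ((K.exactAt_iff' i j k (c.prev_eq' hij) (c.next_eq' hjk)).1 h) y hy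

noncomputable def moduleCatCyclesIsoKer (K : HomologicalComplex (ModuleCat.{v} S) c) {i j : ι}
    (hij : c.Rel i j) : K.cycles i ≅ ModuleCat.of S (LinearMap.ker (K.d i j).hom) :=
  (K.cyclesIsKernel i j (c.next_eq' hij)).conePointUniqueUpToIso (ModuleCat.kernelIsLimit _)

end HomologicalComplex

open HomologicalComplex

namespace CategoryTheory.ShortComplex.ShortExact

variable {Y E F : HomologicalComplex (ModuleCat.{v} S) c} {f : Y ⟶ E} {g : E ⟶ F}
  {w : f ≫ g = 0} (hS : (ShortComplex.mk f g w).ShortExact)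
include hS

theorem moduleCat_injective_f_f (n : ι) : Function.Injective (f.f n) :=
  (hS.map_of_exact (HomologicalComplex.eval _ c n)).moduleCat_injective_f

theorem moduleCat_surjective_g_f (n : ι) : Function.Surjective (g.f n) :=
  (hS.map_of_exact (HomologicalComplex.eval _ c n)).moduleCat_surjective_g

theorem moduleCat_exists_f_f_eq {n : ι} (e : E.X n) (he : g.f n e = 0) : ∃ y, f.f n y = e :=
  (ShortComplex.moduleCat_exact_iff _).1
    (hS.map_of_exact (HomologicalComplex.eval _ c n)).exact e he

theorem ker_prod_d_eq_map (n m : ι) :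
    LinearMap.ker ((g.f n).hom.prod (E.d n m).hom) =
      (LinearMap.ker (Y.d n m).hom).map (f.f n).hom := by
  ext e
  simp only [LinearMap.mem_ker, LinearMap.prod_apply, Function.prod_apply, Prod.mk_eq_zero,
    Submodule.mem_map]
  constructor
  · rintro ⟨hg, hd⟩
    obtain ⟨y, rfl⟩ := hS.moduleCat_exists_f_f_eq e hg
    refine ⟨y, hS.moduleCat_injective_f_f m ?_, rfl⟩
    rw [← Hom.comm_moduleCat_apply, hd, map_zero]
  · rintro ⟨y, hy, rfl⟩
    refine ⟨comp_f_moduleCat_apply_eq_zero w n y, ?_⟩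
    rw [Hom.comm_moduleCat_apply, hy, map_zero]

theorem range_prod_le_range_prod_d {i j k : ι} (hij : c.Rel i j) (hjk : c.Rel j k)
    (hY : Y.ExactAt j) (σ : F.X j ⟶ E.X j) (hσ : σ ≫ g.f j = 𝟙 _)
    (hdσd : F.d i j ≫ σ ≫ E.d j k = 0) :
    LinearMap.range (LinearMap.id.prod (F.d i j ≫ σ).hom) ≤
      LinearMap.range ((g.f i).hom.prod (E.d i j).hom) := by
  have hσx (x : F.X j) : g.f j (σ x) = x := ConcreteCategory.congr_hom hσ x
  rintro _ ⟨x, rfl⟩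
  obtain ⟨e, rfl⟩ := hS.moduleCat_surjective_g_f i x
  -- `d e - σ (d (g e))` comes from a cycle of `Y`, hence from a boundary `d z`; then `e - z` works
  have hu : g.f j (E.d i j e - σ (F.d i j (g.f i e))) = 0 := by
    rw [map_sub, hσx, Hom.comm_moduleCat_apply, sub_self]
  obtain ⟨y, hy⟩ := hS.moduleCat_exists_f_f_eq _ hu
  have hdy : Y.d j k y = 0 := by
    apply hS.moduleCat_injective_f_f k
    rw [← Hom.comm_moduleCat_apply, hy, map_sub, map_zero, d_d_moduleCat_apply, zero_sub,
      neg_eq_zero]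
    exact ConcreteCategory.congr_hom hdσd (g.f i e)
  obtain ⟨z, rfl⟩ := Y.exists_d_eq_of_exactAt_moduleCat hij hjk hY y hdy
  refine ⟨e - f.f i z, ?_⟩
  simp [comp_f_moduleCat_apply_eq_zero w, Hom.comm_moduleCat_apply, hy]

theorem exists_section_comp_d_eq {i j k : ι} (hij : c.Rel i j) (hjk : c.Rel j k)
    (hY : Y.ExactAt j) (hZ : Ext1Vanishes (F.X i) (Y.cycles i))
    (σ : F.X j ⟶ E.X j) (hσ : σ ≫ g.f j = 𝟙 _) (hdσd : F.d i j ≫ σ ≫ E.d j k = 0) :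
    ∃ τ : F.X i ⟶ E.X i, τ ≫ g.f i = 𝟙 _ ∧ τ ≫ E.d i j = F.d i j ≫ σ := by
  let p : E.X i ⟶ ModuleCat.of S (F.X i × E.X j) :=
    ModuleCat.ofHom ((g.f i).hom.prod (E.d i j).hom)
  let φ : F.X i ⟶ ModuleCat.of S (F.X i × E.X j) :=
    ModuleCat.ofHom (LinearMap.id.prod (F.d i j ≫ σ).hom)
  have hker : Ext1Vanishes (F.X i) (ModuleCat.of S (LinearMap.ker p.hom)) :=
    hZ.of_iso_right <| Y.moduleCatCyclesIsoKer hij ≪≫ LinearEquiv.toModuleIso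
      ((Submodule.equivMapOfInjective _ (hS.moduleCat_injective_f_f i) _).trans
        (LinearEquiv.ofEq _ _ (hS.ker_prod_d_eq_map i j).symm))
  obtain ⟨τ, hτ⟩ := ModuleCat.exists_lift_of_ext1Vanishes_ker p φ hker
    (hS.range_prod_le_range_prod_d hij hjk hY σ hσ hdσd)
  refine ⟨τ, ?_, ?_⟩
  · ext x
    exact congrArg (·.1) (ConcreteCategory.congr_hom hτ x)
  · ext x
    exact congrArg (·.2) (ConcreteCategory.congr_hom hτ x)

end CategoryTheory.ShortComplex.ShortExact

end Modules

namespace ChainComplex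

variable {C : Type*} [Category C] [HasZeroMorphisms C] {E F : ChainComplex C ℤ}
  (g : E ⟶ F) (M : ℤ) (hlow : ∀ n ≤ M, IsIso (g.f n))

open Classical in
noncomputable def sectionFromBelow (n : ℤ) : F.X n ⟶ E.X n :=
  if h : n ≤ M then haveI := hlow n h; inv (g.f n)
  else if hτ : ∃ τ : F.X n ⟶ E.X n, τ ≫ g.f n = 𝟙 _ ∧
      τ ≫ E.d n (n - 1) = F.d n (n - 1) ≫ sectionFromBelow (n - 1) then hτ.choose
  else 0
termination_by (n - M).toNat
decreasing_by omega

theorem sectionFromBelow_spec_of_le {n : ℤ} (hn : n ≤ M) :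
    sectionFromBelow g M hlow n ≫ g.f n = 𝟙 _ ∧
      sectionFromBelow g M hlow n ≫ E.d n (n - 1) =
        F.d n (n - 1) ≫ sectionFromBelow g M hlow (n - 1) := by
  have := hlow n hn
  have := hlow (n - 1) (by omega)
  rw [sectionFromBelow, dif_pos hn, sectionFromBelow, dif_pos (by omega)]
  refine ⟨IsIso.inv_hom_id _, ?_⟩
  rw [← cancel_mono (g.f (n - 1)), Category.assoc, ← g.comm, IsIso.inv_hom_id_assoc,
    Category.assoc, IsIso.inv_hom_id, Category.comp_id]

theorem sectionFromBelow_of_not_le {n : ℤ} (hn : ¬n ≤ M)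
    (hτ : ∃ τ : F.X n ⟶ E.X n, τ ≫ g.f n = 𝟙 _ ∧
      τ ≫ E.d n (n - 1) = F.d n (n - 1) ≫ sectionFromBelow g M hlow (n - 1)) :
    sectionFromBelow g M hlow n = hτ.choose := by
  rw [sectionFromBelow, dif_neg hn, dif_pos hτ]

variable (hext : ∀ n (σ : F.X (n - 1) ⟶ E.X (n - 1)), σ ≫ g.f (n - 1) = 𝟙 _ →
  F.d n (n - 1) ≫ σ ≫ E.d (n - 1) (n - 1 - 1) = 0 →
  ∃ τ : F.X n ⟶ E.X n, τ ≫ g.f n = 𝟙 _ ∧ τ ≫ E.d n (n - 1) = F.d n (n - 1) ≫ σ)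
include hlow hext

theorem sectionFromBelow_spec (n : ℤ) :
    sectionFromBelow g M hlow n ≫ g.f n = 𝟙 _ ∧
      sectionFromBelow g M hlow n ≫ E.d n (n - 1) =
        F.d n (n - 1) ≫ sectionFromBelow g M hlow (n - 1) := by
  obtain ⟨k, hk⟩ : ∃ k : ℕ, n ≤ M + k := ⟨(n - M).toNat, by omega⟩
  induction k generalizing n with
  | zero => exact sectionFromBelow_spec_of_le g M hlow (by omega)
  | succ k ih =>
    by_cases hn : n ≤ M
    · exact sectionFromBelow_spec_of_le g M hlow hn
    obtain ⟨hsec, hcomm⟩ := ih (n - 1) (by omega)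
    have hτ := hext n _ hsec (by rw [hcomm, F.d_comp_d_assoc, zero_comp])
    rw [sectionFromBelow_of_not_le g M hlow hn hτ]
    exact hτ.choose_spec

theorem exists_section_of_isIso_of_extend : ∃ s : F ⟶ E, s ≫ g = 𝟙 F := by
  refine ⟨{ f := sectionFromBelow g M hlow, comm' := ?_ }, ?_⟩
  · rintro i j (hij : j + 1 = i)
    obtain rfl : j = i - 1 := by omega
    exact (sectionFromBelow_spec g M hlow hext i).2
  · exact HomologicalComplex.hom_ext _ _ fun n => (sectionFromBelow_spec g M hlow hext n).1

end ChainComplex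

theorem ext1_vanishes_of_bddBelow_acyclic_cotorsion_cycles_general
    (Y : ChainComplex (ModuleCat.{u} R) ℤ)
    (hbdd : ∃ N : ℤ, ∀ n < N, IsZero (Y.X n))
    (hacyclic : ∀ n, Y.ExactAt n)
    (hcycles : ∀ n, IsCotorsionModule (Y.cycles n))
    (F : ChainComplex (ModuleCat.{u} R) ℤ) (hF : FTotallyAcyclic F) :
    Ext1Vanishes F Y := by
  intro E f g w hS
  obtain ⟨N, hN⟩ := hbdd
  have hlow : ∀ n ≤ N - 1, IsIso (g.f n) := fun n hn =>
    (hS.map_of_exact (HomologicalComplex.eval _ _ n)).isIso_g_iff.2 (hN n (by omega))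
  exact ChainComplex.exists_section_of_isIso_of_extend g (N - 1) hlow fun n σ hσ hdσd =>
    hS.exists_section_comp_d_eq (by simp) (by simp) (hacyclic (n - 1)) (hcycles n _ (hF.1 n))
      σ hσ hdσd

theorem ext1_vanishes_of_bddBelow_acyclic_cotorsion_cycles
    [IsNoetherianRing R]
    (Y : ChainComplex (ModuleCat.{u} R) ℤ)
    (hbdd : ∃ N : ℤ, ∀ n < N, IsZero (Y.X n))
    (hacyclic : ∀ n, Y.ExactAt n)
    (hcycles : ∀ n, IsCotorsionModule (Y.cycles n))
    (F : ChainComplex (ModuleCat.{u} R) ℤ) (hF : FTotallyAcyclic F) :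
    Ext1Vanishes F Y :=
  ext1_vanishes_of_bddBelow_acyclic_cotorsion_cycles_general Y hbdd hacyclic hcycles F hF
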